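/- Lemma 1D: let f : A ⊢ B be an arrow term of DS such that A has a subformula occurrence D in which ∧ does not occur and B has a subformula occurrence D′ in which ∧ does not occur, and such that every occurrence of a letter in D is linked in f to an occurrence of a letter in D′ and vice versa. Then the source A of f equals D if and only if the target B of f equals D′. -/
import Mathlib


/-! ### The category Br of Brauerian split equivalences of finite ordinals

An arrow `m ⊢ n` of `Br` is represented as a relation on `ℕ ⊕ ℕ`, where
`Sum.inl i` (with `i < m`) is the source copy `i_s` and `Sum.inr j`
(with `j < n`) is the target copy `j_t`. -/

abbrev GRel : Type := (ℕ ⊕ ℕ) → (ℕ ⊕ ℕ) → Prop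

/-- The identity arrow of `Br` on `n`: transversals `{i_s, i_t}` for `i < n`. -/
def gId (n : ℕ) : GRel := fun u v =>
  ∃ i, i < n ∧ (u = Sum.inl i ∨ u = Sum.inr i) ∧ (v = Sum.inl i ∨ v = Sum.inr i)

/-- The Brauerian split equivalence whose transversals are `{i_s, (φ i)_t}` for `i < m`. -/
def gFun (m : ℕ) (φ : ℕ → ℕ) : GRel := fun u v =>
  ∃ i, i < m ∧ (u = Sum.inl i ∨ u = Sum.inr (φ i)) ∧ (v = Sum.inl i ∨ v = Sum.inr (φ i))

/-- The block transposition exchanging the first `a` and the last `b` elements. -/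
def gSwap (a b : ℕ) : GRel :=
  gFun (a + b) (fun i => if i < a then i + b else i - a)

/-- `G Δ̂∧_{B,A}` with `a = GA`, `b = GB`: identity transversals on the stem `A`
together with caps joining the two copies of each letter occurrence of `B` in
the crown `¬B ∨ B` of the target. -/
def gDelta (a b : ℕ) : GRel := fun u v =>
  (∃ i, i < a ∧ (u = Sum.inl i ∨ u = Sum.inr i) ∧ (v = Sum.inl i ∨ v = Sum.inr i)) ∨
  (∃ j, j < b ∧ (u = Sum.inr (a + j) ∨ u = Sum.inr (a + b + j)) ∧
                (v = Sum.inr (a + j) ∨ v = Sum.inr (a + b + j)))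

/-- `G Σ̂∨_{B,A}` with `a = GA`, `b = GB`: identity transversals on the stem `A`
together with cups joining the two copies of each letter occurrence of `B` in
the crown `B ∧ ¬B` of the source. -/
def gSigma (a b : ℕ) : GRel := fun u v =>
  (∃ i, i < a ∧ (u = Sum.inl (2*b + i) ∨ u = Sum.inr i) ∧
                (v = Sum.inl (2*b + i) ∨ v = Sum.inr i)) ∨
  (∃ j, j < b ∧ (u = Sum.inl j ∨ u = Sum.inl (b + j)) ∧
                (v = Sum.inl j ∨ v = Sum.inl (b + j)))

/-- Composition `P ∗ R` in `Br`: glue along the middle copy and take the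
transitive closure, restricted to the outer copies. -/
def gComp (Pr R : GRel) : GRel := fun u v =>
  Relation.TransGen
    (fun x y : ℕ ⊕ ℕ ⊕ ℕ =>
      (∃ x' y', Sum.map id Sum.inl x' = x ∧ Sum.map id Sum.inl y' = y ∧ R x' y') ∨
      (∃ x' y', Sum.inr x' = x ∧ Sum.inr y' = y ∧ Pr x' y'))
    (Sum.map id Sum.inr u) (Sum.map id Sum.inr v)

/-- Shift a split relation by `a` on the source side and by `d` on the target side. -/
def gShift (a d : ℕ) (R : GRel) : GRel := fun u v =>
  ∃ u' v', R u' v' ∧ u = Sum.map (· + a) (· + d) u' ∧ v = Sum.map (· + a) (· + d) v'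

/-- Disjoint union of split relations: `G(f ξ g) = Gf ∪ Gg_{+GD}^{+GA}`. -/
def gPar (a d : ℕ) (R S : GRel) : GRel := fun u v => R u v ∨ gShift a d S u v
/-! ### The language L∧,∨ generated from the set `P` of letters -/

inductive Form (P : Type) : Type
  | letter : P → Form P
  | conj : Form P → Form P → Form P
  | disj : Form P → Form P → Form P

infixr:70 " ⋏ " => Form.conj
infixr:66 " ⋎ " => Form.disj

/-- The number of occurrences of letters in a formula (the object map of `G`). -/
def Form.size {P : Type} : Form P → ℕ
  | .letter _ => 1
  | .conj A B => A.size + B.size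
  | .disj A B => A.size + B.size
/-! ### Arrow terms of the free symmetric net category DS -/

inductive Term (P : Type) : Form P → Form P → Type
  | id (A : Form P) : Term P A A
  | comp {A B C : Form P} : Term P B C → Term P A B → Term P A C
  | conj {A B D E : Form P} : Term P A D → Term P B E → Term P (A ⋏ B) (D ⋏ E)
  | disj {A B D E : Form P} : Term P A D → Term P B E → Term P (A ⋎ B) (D ⋎ E)
  | bConjTo (A B C : Form P) : Term P (A ⋏ (B ⋏ C)) ((A ⋏ B) ⋏ C)
  | bConjFrom (A B C : Form P) : Term P ((A ⋏ B) ⋏ C) (A ⋏ (B ⋏ C))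
  | bDisjTo (A B C : Form P) : Term P (A ⋎ (B ⋎ C)) ((A ⋎ B) ⋎ C)
  | bDisjFrom (A B C : Form P) : Term P ((A ⋎ B) ⋎ C) (A ⋎ (B ⋎ C))
  | cConj (A B : Form P) : Term P (A ⋏ B) (B ⋏ A)
  | cDisj (A B : Form P) : Term P (B ⋎ A) (A ⋎ B)
  | d (A B C : Form P) : Term P (A ⋏ (B ⋎ C)) ((A ⋏ B) ⋎ C)

infixr:80 " ⬝ " => Term.comp
infixr:70 " ⊼ " => Term.conj
infixr:66 " ⊽ " => Term.disj

/-- The arrow `d^R_{C,B,A} : (C∨B)∧A ⊢ C∨(B∧A)`. -/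
def dR {P : Type} (C B A : Form P) : Term P ((C ⋎ B) ⋏ A) (C ⋎ (B ⋏ A)) :=
  Term.cDisj C (B ⋏ A) ⬝ ((Term.cConj A B ⊽ Term.id C) ⬝
    (Term.d A B C ⬝ ((Term.id A ⊼ Term.cDisj B C) ⬝ Term.cConj (C ⋎ B) A)))
/-! ### The equations of DS, imposed on arrow terms -/

inductive Eqv {P : Type} : ∀ {A B : Form P}, Term P A B → Term P A B → Prop
  -- equivalence and congruence
  | refl {A B : Form P} (f : Term P A B) : Eqv f f
  | symm {A B : Form P} {f g : Term P A B} : Eqv f g → Eqv g f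
  | trans {A B : Form P} {f g h : Term P A B} : Eqv f g → Eqv g h → Eqv f h
  | congComp {A B C : Form P} {g g' : Term P B C} {f f' : Term P A B} :
      Eqv g g' → Eqv f f' → Eqv (g ⬝ f) (g' ⬝ f')
  | congConj {A B D E : Form P} {f f' : Term P A D} {g g' : Term P B E} :
      Eqv f f' → Eqv g g' → Eqv (f ⊼ g) (f' ⊼ g')
  | congDisj {A B D E : Form P} {f f' : Term P A D} {g g' : Term P B E} :
      Eqv f f' → Eqv g g' → Eqv (f ⊽ g) (f' ⊽ g')
  -- (cat 1), (cat 2)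
  | catIdR {A B : Form P} (f : Term P A B) : Eqv (f ⬝ Term.id A) f
  | catIdL {A B : Form P} (f : Term P A B) : Eqv (Term.id B ⬝ f) f
  | catAssoc {A B C D : Form P} (f : Term P A B) (g : Term P B C) (h : Term P C D) :
      Eqv (h ⬝ (g ⬝ f)) ((h ⬝ g) ⬝ f)
  -- bifunctorial equations (ξ 1), (ξ 2)
  | conjOne (A B : Form P) : Eqv (Term.id A ⊼ Term.id B) (Term.id (A ⋏ B))
  | disjOne (A B : Form P) : Eqv (Term.id A ⊽ Term.id B) (Term.id (A ⋎ B))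
  | conjTwo {A₁ B₁ C₁ A₂ B₂ C₂ : Form P} (g₁ : Term P B₁ C₁) (f₁ : Term P A₁ B₁)
      (g₂ : Term P B₂ C₂) (f₂ : Term P A₂ B₂) :
      Eqv ((g₁ ⬝ f₁) ⊼ (g₂ ⬝ f₂)) ((g₁ ⊼ g₂) ⬝ (f₁ ⊼ f₂))
  | disjTwo {A₁ B₁ C₁ A₂ B₂ C₂ : Form P} (g₁ : Term P B₁ C₁) (f₁ : Term P A₁ B₁)
      (g₂ : Term P B₂ C₂) (f₂ : Term P A₂ B₂) :
      Eqv ((g₁ ⬝ f₁) ⊽ (g₂ ⬝ f₂)) ((g₁ ⊽ g₂) ⬝ (f₁ ⊽ f₂))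
  -- naturality equations
  | bConjNat {A B C D E F : Form P} (f : Term P A D) (g : Term P B E) (h : Term P C F) :
      Eqv (((f ⊼ g) ⊼ h) ⬝ Term.bConjTo A B C) (Term.bConjTo D E F ⬝ (f ⊼ (g ⊼ h)))
  | bDisjNat {A B C D E F : Form P} (f : Term P A D) (g : Term P B E) (h : Term P C F) :
      Eqv (((f ⊽ g) ⊽ h) ⬝ Term.bDisjTo A B C) (Term.bDisjTo D E F ⬝ (f ⊽ (g ⊽ h)))
  | cConjNat {A B D E : Form P} (f : Term P A D) (g : Term P B E) :
      Eqv ((g ⊼ f) ⬝ Term.cConj A B) (Term.cConj D E ⬝ (f ⊼ g))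
  | cDisjNat {A B D E : Form P} (f : Term P A D) (g : Term P B E) :
      Eqv ((g ⊽ f) ⬝ Term.cDisj B A) (Term.cDisj E D ⬝ (f ⊽ g))
  | dNat {A B C D E F : Form P} (f : Term P A D) (g : Term P B E) (h : Term P C F) :
      Eqv (((f ⊼ g) ⊽ h) ⬝ Term.d A B C) (Term.d D E F ⬝ (f ⊼ (g ⊽ h)))
  -- (b̂ξ b̂ξ)
  | bConjIso₁ (A B C : Form P) :
      Eqv (Term.bConjFrom A B C ⬝ Term.bConjTo A B C) (Term.id (A ⋏ (B ⋏ C)))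
  | bConjIso₂ (A B C : Form P) :
      Eqv (Term.bConjTo A B C ⬝ Term.bConjFrom A B C) (Term.id ((A ⋏ B) ⋏ C))
  | bDisjIso₁ (A B C : Form P) :
      Eqv (Term.bDisjFrom A B C ⬝ Term.bDisjTo A B C) (Term.id (A ⋎ (B ⋎ C)))
  | bDisjIso₂ (A B C : Form P) :
      Eqv (Term.bDisjTo A B C ⬝ Term.bDisjFrom A B C) (Term.id ((A ⋎ B) ⋎ C))
  -- (b̂ξ 5)
  | bConjPent (A B C D : Form P) :
      Eqv (Term.bConjFrom A B (C ⋏ D) ⬝ Term.bConjFrom (A ⋏ B) C D)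
        ((Term.id A ⊼ Term.bConjFrom B C D) ⬝
          (Term.bConjFrom A (B ⋏ C) D ⬝ (Term.bConjFrom A B C ⊼ Term.id D)))
  | bDisjPent (A B C D : Form P) :
      Eqv (Term.bDisjFrom A B (C ⋎ D) ⬝ Term.bDisjFrom (A ⋎ B) C D)
        ((Term.id A ⊽ Term.bDisjFrom B C D) ⬝
          (Term.bDisjFrom A (B ⋎ C) D ⬝ (Term.bDisjFrom A B C ⊽ Term.id D)))
  -- (ĉ∧ ĉ∧), (ĉ∨ ĉ∨)
  | cConjIso (A B : Form P) : Eqv (Term.cConj B A ⬝ Term.cConj A B) (Term.id (A ⋏ B))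
  | cDisjIso (A B : Form P) : Eqv (Term.cDisj A B ⬝ Term.cDisj B A) (Term.id (A ⋎ B))
  -- (b̂∧ ĉ∧), (b̂∨ ĉ∨)
  | bcConj (A B C : Form P) :
      Eqv ((Term.id B ⊼ Term.cConj C A) ⬝ (Term.bConjFrom B C A ⬝
            (Term.cConj A (B ⋏ C) ⬝ (Term.bConjFrom A B C ⬝ (Term.cConj B A ⊼ Term.id C)))))
        (Term.bConjFrom B A C)
  | bcDisj (A B C : Form P) :
      Eqv ((Term.id B ⊽ Term.cDisj A C) ⬝ (Term.bDisjFrom B C A ⬝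
            (Term.cDisj (B ⋎ C) A ⬝ (Term.bDisjFrom A B C ⬝ (Term.cDisj A B ⊽ Term.id C)))))
        (Term.bDisjFrom B A C)
  -- (d ∧), (d ∨)
  | dConj (A B C D : Form P) :
      Eqv ((Term.bConjFrom A B C ⊽ Term.id D) ⬝ Term.d (A ⋏ B) C D)
        (Term.d A (B ⋏ C) D ⬝ ((Term.id A ⊼ Term.d B C D) ⬝ Term.bConjFrom A B (C ⋎ D)))
  | dDisj (D C B A : Form P) :
      Eqv (Term.d D C (B ⋎ A) ⬝ (Term.id D ⊼ Term.bDisjFrom C B A))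
        (Term.bDisjFrom (D ⋏ C) B A ⬝ ((Term.d D C B ⊽ Term.id A) ⬝ Term.d D (C ⋎ B) A))
  -- (d b̂∧), (d b̂∨)
  | dBConj (A B C D : Form P) :
      Eqv (dR (A ⋏ B) C D ⬝ (Term.d A B C ⊼ Term.id D))
        (Term.d A B (C ⋏ D) ⬝ ((Term.id A ⊼ dR B C D) ⬝ Term.bConjFrom A (B ⋎ C) D))
  | dBDisj (D C B A : Form P) :
      Eqv ((Term.id D ⊽ Term.d C B A) ⬝ dR D C (B ⋎ A))
        (Term.bDisjFrom D (C ⋏ B) A ⬝ ((dR D C B ⊽ Term.id A) ⬝ Term.d (D ⋎ C) B A))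
/-- The functor `G` from DS to Br on arrow terms. -/
def Term.G {P : Type} : ∀ {A B : Form P}, Term P A B → GRel
  | _, _, .id A => gId A.size
  | _, _, .comp g f => gComp (Term.G g) (Term.G f)
  | _, _, @Term.conj _ A _ D _ f g => gPar A.size D.size (Term.G f) (Term.G g)
  | _, _, @Term.disj _ A _ D _ f g => gPar A.size D.size (Term.G f) (Term.G g)
  | _, _, .bConjTo A B C => gId (A.size + (B.size + C.size))
  | _, _, .bConjFrom A B C => gId (A.size + B.size + C.size)
  | _, _, .bDisjTo A B C => gId (A.size + (B.size + C.size))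
  | _, _, .bDisjFrom A B C => gId (A.size + B.size + C.size)
  | _, _, .cConj A B => gSwap A.size B.size
  | _, _, .cDisj A B => gSwap B.size A.size
  | _, _, .d A B C => gId (A.size + (B.size + C.size))
/-! ### Occurrences of letters and subformula occurrences -/

/-- The letter at the `(n+1)`-th letter-occurrence position of a formula
(`n` counted from `0`, from the left). -/
def Form.letterAt {P : Type} : Form P → ℕ → Option P
  | .letter p, 0 => some p
  | .letter _, _ + 1 => none
  | .conj A B, n => if n < A.size then A.letterAt n else B.letterAt (n - A.size)
  | .disj A B, n => if n < A.size then A.letterAt n else B.letterAt (n - A.size)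

/-- Directions for addressing subformula occurrences. -/
inductive Dir : Type
  | l
  | r
deriving DecidableEq

/-- The subformula occurrence of a formula at a given position (path). -/
def Form.subAt {P : Type} : Form P → List Dir → Option (Form P)
  | A, [] => some A
  | .conj A _, .l :: π => A.subAt π
  | .conj _ B, .r :: π => B.subAt π
  | .disj A _, .l :: π => A.subAt π
  | .disj _ B, .r :: π => B.subAt π
  | .letter _, _ :: _ => none

/-- The number of letter occurrences strictly to the left of the subformula
occurrence at a given position. -/
def Form.offsetAt {P : Type} : Form P → List Dir → ℕ
  | _, [] => 0
  | .conj A _, .l :: π => A.offsetAt π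
  | .conj A B, .r :: π => A.size + B.offsetAt π
  | .disj A _, .l :: π => A.offsetAt π
  | .disj A B, .r :: π => A.size + B.offsetAt π
  | .letter _, _ :: _ => 0

/-- The `(n+1)`-th occurrence of a letter in `A` is *linked* in `f : A ⊢ B` to the
`(m+1)`-th occurrence of the same letter in `B` when `{n_s, m_t}` is a member of
the partition corresponding to `Gf`. -/
def Linked {P : Type} {A B : Form P} (f : Term P A B) (n m : ℕ) : Prop :=
  Term.G f (Sum.inl n) (Sum.inr m)

/-- In a formula the connective ∧ does not occur. -/
def Form.noConj {P : Type} : Form P → Prop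
  | .letter _ => True
  | .conj _ _ => False
  | .disj A B => A.noConj ∧ B.noConj


/-! ### Auxiliary lemmas -/

lemma Form.size_pos {P : Type} (A : Form P) : 0 < A.size := by
  induction A <;> simp [Form.size] <;> omega

lemma Term.size_eq {P : Type} {A B : Form P} (f : Term P A B) : A.size = B.size := by
  induction f <;> simp_all [Form.size] <;> omega

lemma Term.noConj_iff {P : Type} {A B : Form P} (f : Term P A B) :
    A.noConj ↔ B.noConj := by
  induction f <;> simp_all [Form.noConj] <;> tauto

lemma subAt_bounds {P : Type} :
    ∀ (π : List Dir) (A D : Form P), A.subAt π = some D →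
      A.offsetAt π + D.size ≤ A.size ∧ (π ≠ [] → D.size < A.size) := by
  intro π
  induction π with
  | nil =>
    intro A D h
    simp [Form.subAt] at h
    subst h
    simp [Form.offsetAt]
  | cons d π ih =>
    intro A D h
    cases A with
    | letter p => simp [Form.subAt] at h
    | conj A B =>
      cases d <;> simp only [Form.subAt, Form.offsetAt, Form.size] at h ⊢ <;>
        [skip; skip] <;>
        · have h1 := ih _ _ h
          have h2 := Form.size_pos A
          have h3 := Form.size_pos B
          constructor
          · omega
          · intro _; omega
    | disj A B =>
      cases d <;> simp only [Form.subAt, Form.offsetAt, Form.size] at h ⊢ <;>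
        [skip; skip] <;>
        · have h1 := ih _ _ h
          have h2 := Form.size_pos A
          have h3 := Form.size_pos B
          constructor
          · omega
          · intro _; omega


/-- `R` is the split equivalence of a permutation `φ` of `{0,…,n-1}` with inverse `ψ`. -/
def gFunLike (n : ℕ) (φ ψ : ℕ → ℕ) (R : GRel) : Prop :=
  (∀ i, i < n → φ i < n ∧ ψ (φ i) = i) ∧
  (∀ j, j < n → ψ j < n ∧ φ (ψ j) = j) ∧
  (∀ u v, R u v ↔ gFun n φ u v)

lemma gFunLike_id (n : ℕ) : gFunLike n id id (gId n) := by
  refine ⟨fun i hi => ⟨hi, rfl⟩, fun j hj => ⟨hj, rfl⟩, fun u v => ?_⟩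
  simp [gId, gFun]

lemma gFunLike_swap (a b : ℕ) :
    gFunLike (a + b) (fun i => if i < a then i + b else i - a)
      (fun j => if j < b then j + a else j - b) (gSwap a b) := by
  refine ⟨fun i hi => ?_, fun j hj => ?_, fun u v => Iff.rfl⟩
  · constructor
    · simp only []; split_ifs <;> omega
    · by_cases h : i < a
      · simp only [if_pos h]
        have : ¬ (i + b < b) := by omega
        simp only [this, if_neg, if_false]
        omega
      · simp only [if_neg h]
        have : i - a < b := by omega
        simp only [this, if_pos]
        omega
  · constructor
    · simp only []; split_ifs <;> omega
    · by_cases h : j < b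
      · simp only [if_pos h]
        have : ¬ (j + a < a) := by omega
        simp only [this, if_neg, if_false]
        omega
      · simp only [if_neg h]
        have : j - b < a := by omega
        simp only [this, if_pos]
        omega


lemma gFunLike_par {a b : ℕ} {φ₁ ψ₁ φ₂ ψ₂ : ℕ → ℕ} {R S : GRel}
    (h1 : gFunLike a φ₁ ψ₁ R) (h2 : gFunLike b φ₂ ψ₂ S) :
    gFunLike (a + b) (fun i => if i < a then φ₁ i else φ₂ (i - a) + a)
      (fun j => if j < a then ψ₁ j else ψ₂ (j - a) + a) (gPar a a R S) := by
  refine ⟨fun i hi => ?_, fun j hj => ?_, fun u v => ?_⟩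
  · simp only []
    by_cases h : i < a
    · obtain ⟨hx, hy⟩ := h1.1 i h
      simp only [if_pos h, if_pos hx, hy]
      exact ⟨by omega, trivial⟩
    · have hia : i - a < b := by omega
      obtain ⟨hx, hy⟩ := h2.1 (i - a) hia
      have hna : ¬ (φ₂ (i - a) + a < a) := by omega
      simp only [if_neg h, if_neg hna, Nat.add_sub_cancel, hy]
      omega
  · simp only []
    by_cases h : j < a
    · obtain ⟨hx, hy⟩ := h1.2.1 j h
      simp only [if_pos h, if_pos hx, hy]
      exact ⟨by omega, trivial⟩
    · have hja : j - a < b := by omega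
      obtain ⟨hx, hy⟩ := h2.2.1 (j - a) hja
      have hna : ¬ (ψ₂ (j - a) + a < a) := by omega
      simp only [if_neg h, if_neg hna, Nat.add_sub_cancel, hy]
      omega
  · constructor
    · rintro (hR | ⟨u', v', hS, rfl, rfl⟩)
      · obtain ⟨i, hi, hu, hv⟩ := (h1.2.2 u v).1 hR
        refine ⟨i, by omega, ?_, ?_⟩
        · rcases hu with h | h
          · exact Or.inl h
          · right; rw [h]; simp [hi]
        · rcases hv with h | h
          · exact Or.inl h
          · right; rw [h]; simp [hi]
      · obtain ⟨j, hj, hu', hv'⟩ := (h2.2.2 u' v').1 hS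
        have hna : ¬ (j + a < a) := by omega
        have hsub : j + a - a = j := by omega
        refine ⟨j + a, by omega, ?_, ?_⟩
        · rcases hu' with h | h <;> subst h <;> simp [Sum.map, hna, hsub]
        · rcases hv' with h | h <;> subst h <;> simp [Sum.map, hna, hsub]
    · rintro ⟨i, hi, hu, hv⟩
      by_cases h : i < a
      · left
        refine (h1.2.2 u v).2 ⟨i, h, ?_, ?_⟩
        · rcases hu with h' | h'
          · exact Or.inl h'
          · right; rw [h']; simp [h]
        · rcases hv with h' | h'
          · exact Or.inl h'
          · right; rw [h']; simp [h]
      · right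
        have hsub : i - a + a = i := by omega
        have hia : i - a < b := by omega
        have hχ : (if i < a then φ₁ i else φ₂ (i - a) + a) = φ₂ (i - a) + a := if_neg h
        rcases hu with h' | h' <;> rcases hv with h'' | h'' <;> subst h' <;> subst h''
        · exact ⟨Sum.inl (i - a), Sum.inl (i - a),
            (h2.2.2 _ _).2 ⟨i - a, hia, Or.inl rfl, Or.inl rfl⟩,
            by simp [Sum.map, hsub], by simp [Sum.map, hsub]⟩
        · exact ⟨Sum.inl (i - a), Sum.inr (φ₂ (i - a)),
            (h2.2.2 _ _).2 ⟨i - a, hia, Or.inl rfl, Or.inr rfl⟩,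
            by simp [Sum.map, hsub], by simp [Sum.map, hχ]⟩
        · exact ⟨Sum.inr (φ₂ (i - a)), Sum.inl (i - a),
            (h2.2.2 _ _).2 ⟨i - a, hia, Or.inr rfl, Or.inl rfl⟩,
            by simp [Sum.map, hχ], by simp [Sum.map, hsub]⟩
        · exact ⟨Sum.inr (φ₂ (i - a)), Sum.inr (φ₂ (i - a)),
            (h2.2.2 _ _).2 ⟨i - a, hia, Or.inr rfl, Or.inr rfl⟩,
            by simp [Sum.map, hχ], by simp [Sum.map, hχ]⟩


private def clsFn (n : ℕ) (ψ₁ ψ₂ : ℕ → ℕ) : ℕ ⊕ ℕ ⊕ ℕ → Option ℕ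
  | Sum.inl i => if i < n then some i else none
  | Sum.inr (Sum.inl c) => if c < n then some (ψ₁ c) else none
  | Sum.inr (Sum.inr j) => if j < n then some (ψ₁ (ψ₂ j)) else none

lemma gFunLike_comp {n : ℕ} {φ₁ ψ₁ φ₂ ψ₂ : ℕ → ℕ} {R S : GRel}
    (hf : gFunLike n φ₁ ψ₁ R) (hg : gFunLike n φ₂ ψ₂ S) :
    gFunLike n (fun i => φ₂ (φ₁ i)) (fun j => ψ₁ (ψ₂ j)) (gComp S R) := by
  refine ⟨fun i hi => ?_, fun j hj => ?_, fun u v => ?_⟩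
  · obtain ⟨h1, h2⟩ := hf.1 i hi
    obtain ⟨h3, h4⟩ := hg.1 (φ₁ i) h1
    obtain ⟨h5, h6⟩ := hg.2.1 (φ₂ (φ₁ i)) h3
    simp only []
    refine ⟨h3, ?_⟩
    have : ψ₂ (φ₂ (φ₁ i)) = φ₁ i := by
      have := hg.1 (φ₁ i) h1
      exact this.2
    rw [this, h2]
  · obtain ⟨h1, h2⟩ := hg.2.1 j hj
    obtain ⟨h3, h4⟩ := hf.2.1 (ψ₂ j) h1
    simp only []
    exact ⟨h3, by rw [h4, h2]⟩
  · set step : (ℕ ⊕ ℕ ⊕ ℕ) → (ℕ ⊕ ℕ ⊕ ℕ) → Prop := fun x y =>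
      (∃ x' y', Sum.map id Sum.inl x' = x ∧ Sum.map id Sum.inl y' = y ∧ R x' y') ∨
      (∃ x' y', Sum.inr x' = x ∧ Sum.inr y' = y ∧ S x' y') with hstepdef
    set cls : (ℕ ⊕ ℕ ⊕ ℕ) → Option ℕ := clsFn n ψ₁ ψ₂ with hclsdef
    have hstep : ∀ x y, step x y → ∃ i, i < n ∧ cls x = some i ∧ cls y = some i := by
      rintro x y (⟨x', y', rfl, rfl, hR⟩ | ⟨x', y', rfl, rfl, hS⟩)
      · obtain ⟨i, hi, hx', hy'⟩ := (hf.2.2 x' y').1 hR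
        refine ⟨i, hi, ?_, ?_⟩
        · rcases hx' with h | h <;> subst h <;>
            simp [hclsdef, clsFn, Sum.map, hi, (hf.1 i hi).1, (hf.1 i hi).2]
        · rcases hy' with h | h <;> subst h <;>
            simp [hclsdef, clsFn, Sum.map, hi, (hf.1 i hi).1, (hf.1 i hi).2]
      · obtain ⟨c, hc, hx', hy'⟩ := (hg.2.2 x' y').1 hS
        refine ⟨ψ₁ c, (hf.2.1 c hc).1, ?_, ?_⟩
        · rcases hx' with h | h <;> subst h <;>
            simp [hclsdef, clsFn, hc, (hg.1 c hc).1, (hg.1 c hc).2]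
        · rcases hy' with h | h <;> subst h <;>
            simp [hclsdef, clsFn, hc, (hg.1 c hc).1, (hg.1 c hc).2]
    have htg : ∀ x y, Relation.TransGen step x y →
        ∃ i, i < n ∧ cls x = some i ∧ cls y = some i := by
      intro x y h
      induction h with
      | single h' => exact hstep _ _ h'
      | tail h₁ h₂ ih =>
        obtain ⟨i, hi, hx, hy⟩ := ih
        obtain ⟨i', hi', hy', hz⟩ := hstep _ _ h₂
        rw [hy] at hy'
        injection hy' with e
        exact ⟨i, hi, hx, e ▸ hz⟩
    constructor
    · intro h
      obtain ⟨i, hi, hu, hv⟩ := htg _ _ h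
      have key : ∀ w : ℕ ⊕ ℕ, cls (Sum.map id Sum.inr w) = some i →
          (w = Sum.inl i ∨ w = Sum.inr (φ₂ (φ₁ i))) := by
        rintro (a | b) hw
        · rw [hclsdef] at hw
          simp only [Sum.map_inl, id, clsFn] at hw
          split at hw
          · left
            injection hw with e
            rw [e]
          · exact absurd hw (by simp)
        · rw [hclsdef] at hw
          simp only [Sum.map_inr, clsFn] at hw
          split at hw
          · right
            injection hw with e
            rename_i hb
            obtain ⟨hb1, hb2⟩ := hg.2.1 b hb
            obtain ⟨hb3, hb4⟩ := hf.2.1 (ψ₂ b) hb1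
            rw [← e, hb4, hb2]
          · exact absurd hw (by simp)
      exact ⟨i, hi, key u hu, key v hv⟩
    · rintro ⟨i, hi, hu, hv⟩
      obtain ⟨hp1, hp2⟩ := hf.1 i hi
      obtain ⟨hq1, hq2⟩ := hg.1 (φ₁ i) hp1
      have s1 : step (Sum.inl i) (Sum.inr (Sum.inl (φ₁ i))) :=
        Or.inl ⟨Sum.inl i, Sum.inr (φ₁ i), rfl, rfl,
          (hf.2.2 _ _).2 ⟨i, hi, Or.inl rfl, Or.inr rfl⟩⟩
      have s1' : step (Sum.inr (Sum.inl (φ₁ i))) (Sum.inl i) :=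
        Or.inl ⟨Sum.inr (φ₁ i), Sum.inl i, rfl, rfl,
          (hf.2.2 _ _).2 ⟨i, hi, Or.inr rfl, Or.inl rfl⟩⟩
      have s2 : step (Sum.inr (Sum.inl (φ₁ i))) (Sum.inr (Sum.inr (φ₂ (φ₁ i)))) :=
        Or.inr ⟨Sum.inl (φ₁ i), Sum.inr (φ₂ (φ₁ i)), rfl, rfl,
          (hg.2.2 _ _).2 ⟨φ₁ i, hp1, Or.inl rfl, Or.inr rfl⟩⟩
      have s2' : step (Sum.inr (Sum.inr (φ₂ (φ₁ i)))) (Sum.inr (Sum.inl (φ₁ i))) :=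
        Or.inr ⟨Sum.inr (φ₂ (φ₁ i)), Sum.inl (φ₁ i), rfl, rfl,
          (hg.2.2 _ _).2 ⟨φ₁ i, hp1, Or.inr rfl, Or.inl rfl⟩⟩
      show Relation.TransGen step (Sum.map id Sum.inr u) (Sum.map id Sum.inr v)
      rcases hu with h | h <;> rcases hv with h' | h' <;> subst h <;> subst h' <;>
        simp only [Sum.map, id]
      · exact (Relation.TransGen.single s1).tail s1'
      · exact (Relation.TransGen.single s1).tail s2
      · exact (Relation.TransGen.single s2').tail s1'
      · exact (Relation.TransGen.single s2').tail s2

lemma perm_of_noConj {P : Type} : ∀ {A B : Form P} (f : Term P A B), A.noConj →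
    ∃ φ ψ, gFunLike A.size φ ψ f.G := by
  intro A B f
  induction f with
  | id A => exact fun _ => ⟨_, _, gFunLike_id A.size⟩
  | comp g f ihf ihg =>
    intro h
    obtain ⟨φ₁, ψ₁, h1⟩ := ihg h
    obtain ⟨φ₂, ψ₂, h2⟩ := ihf ((Term.noConj_iff f).1 h)
    rw [← Term.size_eq f] at h2
    exact ⟨_, _, gFunLike_comp h1 h2⟩
  | conj f g ihf ihg => intro h; simp [Form.noConj] at h
  | disj f g ihf ihg =>
    intro h
    obtain ⟨φ₁, ψ₁, h1⟩ := ihf h.1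
    obtain ⟨φ₂, ψ₂, h2⟩ := ihg h.2
    rename_i A B D E
    have hAD : A.size = D.size := Term.size_eq f
    refine ⟨fun i => if i < A.size then φ₁ i else φ₂ (i - A.size) + A.size,
            fun j => if j < A.size then ψ₁ j else ψ₂ (j - A.size) + A.size, ?_⟩
    have hG : (f ⊽ g).G = gPar A.size A.size f.G g.G := by
      show gPar A.size D.size f.G g.G = _
      rw [hAD]
    rw [show (A ⋎ B).size = A.size + B.size from rfl, hG]
    exact gFunLike_par h1 h2
  | bConjTo A B C => intro h; simp [Form.noConj] at h
  | bConjFrom A B C => intro h; simp [Form.noConj] at h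
  | bDisjTo A B C => exact fun _ => ⟨_, _, gFunLike_id _⟩
  | bDisjFrom A B C => exact fun _ => ⟨_, _, gFunLike_id _⟩
  | cConj A B => intro h; simp [Form.noConj] at h
  | cDisj A B =>
    exact fun _ => ⟨_, _, gFunLike_swap B.size A.size⟩
  | d A B C => intro h; simp [Form.noConj] at h

lemma linked_eq {n : ℕ} {φ ψ : ℕ → ℕ} {R : GRel} (h : gFunLike n φ ψ R) {k m : ℕ}
    (hl : R (Sum.inl k) (Sum.inr m)) : k < n ∧ m = φ k := by
  obtain ⟨i, hi, hu, hv⟩ := (h.2.2 _ _).1 hl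
  rcases hu with h1 | h1
  · injection h1 with e
    subst e
    rcases hv with h2 | h2
    · exact absurd h2 (by simp)
    · injection h2 with e2
      exact ⟨hi, e2⟩
  · exact absurd h1 (by simp)

/-- **Lemma 1D**: let `f : A ⊢ B` be an arrow term of DS such that `A` has a
subformula occurrence `D` in which ∧ does not occur and `B` has a subformula
occurrence `D′` in which ∧ does not occur, and such that every occurrence of a
letter in `D` is linked in `f` to an occurrence of a letter in `D′` and vice
versa. Then the source `A` of `f` equals `D` iff the target `B` of `f` equals `D′`. -/
theorem lemma_1D {P : Type} {A B : Form P} (f : Term P A B)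
    (πA πB : List Dir) (D D' : Form P)
    (hD : A.subAt πA = some D) (hD' : B.subAt πB = some D')
    (hnc : D.noConj) (hnc' : D'.noConj)
    (hfwd : ∀ k, k < D.size → ∃ k', k' < D'.size ∧
      Linked f (A.offsetAt πA + k) (B.offsetAt πB + k'))
    (hbwd : ∀ k', k' < D'.size → ∃ k, k < D.size ∧
      Linked f (A.offsetAt πA + k) (B.offsetAt πB + k')) :
    (A = D ↔ B = D') := by
  have hsz := Term.size_eq f
  constructor
  · rintro rfl
    have hπA : πA = [] := by
      by_contra hne
      exact absurd ((subAt_bounds πA A A hD).2 hne) (lt_irrefl _)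
    subst hπA
    obtain ⟨φ, ψ, hφ⟩ := perm_of_noConj f hnc
    have hb' := (subAt_bounds πB B D' hD').1
    set off := B.offsetAt πB with hoff
    have key : ∀ k, k < A.size → off ≤ φ k ∧ φ k - off < D'.size := by
      intro k hk
      obtain ⟨k', hk', hl⟩ := hfwd k hk
      simp only [Form.offsetAt, Nat.zero_add] at hl
      have he := linked_eq hφ hl
      omega
    have hcard : A.size ≤ D'.size := by
      have h1 : ∀ k ∈ Finset.range A.size, φ k - off ∈ Finset.range D'.size := by
        intro k hk
        simp only [Finset.mem_range] at hk ⊢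
        exact (key k hk).2
      have h2 : Set.InjOn (fun k => φ k - off) (Finset.range A.size) := by
        intro k₁ hk₁ k₂ hk₂ he
        simp only [Finset.coe_range, Set.mem_Iio] at hk₁ hk₂
        simp only [] at he
        have e1 := key k₁ hk₁
        have e2 := key k₂ hk₂
        have : φ k₁ = φ k₂ := by omega
        have i1 := (hφ.1 k₁ hk₁).2
        have i2 := (hφ.1 k₂ hk₂).2
        rw [← i1, ← i2, this]
      simpa using Finset.card_le_card_of_injOn (fun k => φ k - off) h1 h2
    have hπB : πB = [] := by
      by_contra hne
      have := (subAt_bounds πB B D' hD').2 hne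
      omega
    subst hπB
    simpa [Form.subAt] using hD'
  · rintro rfl
    have hncA : A.noConj := (Term.noConj_iff f).2 hnc'
    have hπB : πB = [] := by
      by_contra hne
      exact absurd ((subAt_bounds πB B B hD').2 hne) (lt_irrefl _)
    subst hπB
    obtain ⟨φ, ψ, hφ⟩ := perm_of_noConj f hncA
    have ha := (subAt_bounds πA A D hD).1
    set off := A.offsetAt πA with hoff
    have key : ∀ k', k' < B.size → off ≤ ψ k' ∧ ψ k' - off < D.size := by
      intro k' hk'
      obtain ⟨k, hk, hl⟩ := hbwd k' hk'
      simp only [Form.offsetAt, Nat.zero_add] at hl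
      have he := linked_eq hφ hl
      have hψ := (hφ.1 (off + k) he.1).2
      rw [← he.2] at hψ
      omega
    have hcard : B.size ≤ D.size := by
      have h1 : ∀ k' ∈ Finset.range B.size, ψ k' - off ∈ Finset.range D.size := by
        intro k' hk'
        simp only [Finset.mem_range] at hk' ⊢
        exact (key k' hk').2
      have h2 : Set.InjOn (fun k' => ψ k' - off) (Finset.range B.size) := by
        intro k₁ hk₁ k₂ hk₂ he
        simp only [Finset.coe_range, Set.mem_Iio] at hk₁ hk₂
        simp only [] at he
        have e1 := key k₁ hk₁
        have e2 := key k₂ hk₂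
        have hψe : ψ k₁ = ψ k₂ := by omega
        have i1 := (hφ.2.1 k₁ (by omega)).2
        have i2 := (hφ.2.1 k₂ (by omega)).2
        rw [← i1, ← i2, hψe]
      simpa using Finset.card_le_card_of_injOn (fun k' => ψ k' - off) h1 h2
    have hπA : πA = [] := by
      by_contra hne
      have := (subAt_bounds πA A D hD).2 hne
      omega
    subst hπA
    simpa [Form.subAt] using hD
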